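/- arXiv:2305.06464 — 3 statements merged into one kernel-verified Lean document; each statement's English description precedes it below -/
import Mathlib

section
/- Let F be a field, let S be a connected proper F-scheme of dimension 1, let X be a scheme, and let s ∈ Γ(X, O_X) be a global section of the structure sheaf such that the basic open subscheme X_s (the locus where s does not vanish) is affine. Let f : S → X be a morphism of schemes whose set-theoretic image contains at least two points (f is nonconstant). Then there exists a closed point x ∈ S such that the pullback section f♯(s) ∈ Γ(S, O_S) vanishes at x, i.e. the image of f♯(s) in the residue field κ(x) is zero. -/
/-!
Since `S` is universally closed over `Spec F`, the ring `Γ(S, 𝒪_S)` is integral over `F`. An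
integral element `t` satisfies `tᵐ (a + t b) = 0` with `a` a unit, so the loci where `t` and
`a + t b` are nonzero are complementary opens, and connectedness forces `S_t` to be empty or
all of `S`. If `S_{f♯ s}` is empty, any closed point works. Otherwise `f` factors through the
affine scheme `X_s`; but every global section of `S` vanishes everywhere or nowhere, so
`S → Spec Γ(S, 𝒪_S)` is constant, hence so is every morphism from `S` to an affine scheme.
-/

open AlgebraicGeometry CategoryTheory

theorem RingHom.IsIntegralElem.exists_pow_mul_add_mul_eq_zero {K R : Type*} [Field K]
    [CommRing R] {φ : K →+* R} {t : R} (ht : φ.IsIntegralElem t) :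
    ∃ (m : ℕ) (a b : R), IsUnit a ∧ t ^ m * (a + t * b) = 0 := by
  obtain ⟨p, hmonic, hp⟩ := ht
  obtain ⟨q, hpq, hq⟩ :=
    Polynomial.exists_eq_pow_rootMultiplicity_mul_and_not_dvd p hmonic.ne_zero 0
  generalize p.rootMultiplicity 0 = m at hpq
  rw [map_zero, sub_zero, Polynomial.X_dvd_iff] at hq
  have hq_eval : φ (q.coeff 0) + t * q.divX.eval₂ φ t = q.eval₂ φ t := by
    have := congrArg (Polynomial.eval₂ φ t) q.X_mul_divX_add
    rwa [Polynomial.eval₂_add, Polynomial.eval₂_mul, Polynomial.eval₂_X, Polynomial.eval₂_C,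
      add_comm] at this
  refine ⟨m, φ (q.coeff 0), q.divX.eval₂ φ t, (Ne.isUnit hq).map φ, ?_⟩
  simpa [hq_eval, hpq] using hp

namespace AlgebraicGeometry.Scheme

lemma isClopen_basicOpen_of_pow_mul_eq_zero {X : Scheme}
    {t a b : Γ(X, ⊤)} {m : ℕ} (ha : IsUnit a) (h : t ^ m * (a + t * b) = 0) :
    IsClopen (X.basicOpen t : Set X) := by
  have hcompl : (X.basicOpen t : Set X) = (X.basicOpen (a + t * b) : Set X)ᶜ := by
    ext x
    rw [Set.mem_compl_iff, SetLike.mem_coe, SetLike.mem_coe,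
      ← X.evaluation_ne_zero_iff_mem_basicOpen (U := ⊤) x trivial,
      ← X.evaluation_ne_zero_iff_mem_basicOpen (U := ⊤) x trivial]
    have hx := congrArg (ConcreteCategory.hom (X.evaluation ⊤ x trivial)) h
    have ha' := (ha.map (ConcreteCategory.hom (X.evaluation ⊤ x trivial))).ne_zero
    simp only [map_mul, map_pow, map_add, map_zero, mul_eq_zero, pow_eq_zero_iff'] at hx ⊢
    constructor
    · rintro ht_ne hu
      exact ht_ne (hx.resolve_right hu).1
    · intro hu ht
      exact hu (by rw [ht, zero_mul, add_zero]; exact ha')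
  exact ⟨by rw [hcompl]; exact (X.basicOpen _).isOpen.isClosed_compl, (X.basicOpen t).isOpen⟩

lemma basicOpen_eq_bot_or_eq_top_of_universallyClosed {K : Type*} [Field K] {X : Scheme}
    (p : X ⟶ Spec (.of K)) [UniversallyClosed p] [ConnectedSpace X] (t : Γ(X, ⊤)) :
    X.basicOpen t = ⊥ ∨ X.basicOpen t = ⊤ := by
  have hint : (p.appTop.hom.comp (ΓSpecIso (.of K)).inv.hom).IsIntegral :=
    .trans _ _ (RingHom.isIntegral_of_surjective _
      (ΓSpecIso (.of K)).commRingCatIsoToRingEquiv.symm.surjective)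
      (isIntegral_appTop_of_universallyClosed p)
  obtain ⟨m, a, b, ha, h⟩ := (hint t).exists_pow_mul_add_mul_eq_zero
  rcases isClopen_iff.mp (isClopen_basicOpen_of_pow_mul_eq_zero ha h) with h | h
  · exact Or.inl (TopologicalSpace.Opens.ext h)
  · exact Or.inr (TopologicalSpace.Opens.ext h)

lemma toSpecΓ_apply_eq_of_basicOpen_eq_bot_or_eq_top {X : Scheme}
    (hX : ∀ t : Γ(X, ⊤), X.basicOpen t = ⊥ ∨ X.basicOpen t = ⊤) (x y : X) :
    X.toSpecΓ x = X.toSpecΓ y := by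
  have hmem (z : X) (t : Γ(X, ⊤)) : t ∉ (X.toSpecΓ z).asIdeal ↔ z ∈ X.basicOpen t := by
    rw [← toSpecΓ_preimage_basicOpen]
    rfl
  refine PrimeSpectrum.ext (Ideal.ext fun t ↦ not_iff_not.mp ?_)
  rw [hmem, hmem]
  rcases hX t with h | h <;> simp [h]

lemma Hom.apply_eq_of_basicOpen_eq_bot_or_eq_top {X Y : Scheme} [IsAffine Y] (g : X ⟶ Y)
    (hX : ∀ t : Γ(X, ⊤), X.basicOpen t = ⊥ ∨ X.basicOpen t = ⊤) (x y : X) : g x = g y := by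
  have hg (z : X) : g z = Y.isoSpec.inv (Spec.map g.appTop (X.toSpecΓ z)) := by
    rw [← Scheme.Hom.comp_apply, ← Scheme.Hom.comp_apply, ← toSpecΓ_naturality_assoc]
    simp [isoSpec]
  rw [hg, hg, toSpecΓ_apply_eq_of_basicOpen_eq_bot_or_eq_top hX x y]

end AlgebraicGeometry.Scheme

theorem exists_closedPoint_vanishing_pullback_section_general
    (F : Type*) [Field F]
    (S : Scheme) (pS : S ⟶ Spec (CommRingCat.of F)) [IsProper pS]
    [ConnectedSpace S]
    (X : Scheme) (s : Γ(X, ⊤)) (haff : IsAffineOpen (X.basicOpen s))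
    (f : S ⟶ X) (hnc : ∃ a b : S, f.base a ≠ f.base b) :
    ∃ x : S, IsClosed ({x} : Set S) ∧ S.Γevaluation x (f.appTop s) = 0 := by
  have hS := Scheme.basicOpen_eq_bot_or_eq_top_of_universallyClosed pS
  obtain ⟨a, b, hab⟩ := hnc
  rcases hS (f.appTop s) with hbot | htop
  · have : CompactSpace S := compactSpace_of_universallyClosed pS
    obtain ⟨x, -, hx⟩ := isClosed_univ.exists_closed_singleton ⟨a, trivial⟩
    refine ⟨x, hx, (S.evaluation_eq_zero_iff_notMem_basicOpen (U := ⊤) x trivial _).mpr ?_⟩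
    simp [hbot]
  · have hrange : Set.range f ⊆ Set.range (X.basicOpen s).ι := by
      rw [Scheme.Opens.range_ι]
      rintro - ⟨x, rfl⟩
      change x ∈ f ⁻¹ᵁ X.basicOpen s
      rw [Scheme.preimage_basicOpen_top, htop]
      trivial
    have : IsAffine (X.basicOpen s) := haff
    let g := IsOpenImmersion.lift _ f hrange
    refine absurd ?_ hab
    rw [← IsOpenImmersion.lift_fac _ f hrange, Scheme.Hom.comp_apply,
      Scheme.Hom.comp_apply, g.apply_eq_of_basicOpen_eq_bot_or_eq_top hS a b]

/-- **Lemma 3.2 (for the structure sheaf):** a nonconstant morphism from a connected proper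
curve `S` to a scheme `X` with an affine basic open `X_s` pulls `s` back to a section
vanishing at some closed point of `S`. -/
theorem exists_closedPoint_vanishing_pullback_section
    (F : Type*) [Field F]
    (S : Scheme) (pS : S ⟶ Spec (CommRingCat.of F)) [IsProper pS]
    [ConnectedSpace S] (hdimS : topologicalKrullDim S = 1)
    (X : Scheme) (s : Γ(X, ⊤)) (haff : IsAffineOpen (X.basicOpen s))
    (f : S ⟶ X) (hnc : ∃ a b : S, f.base a ≠ f.base b) :
    ∃ x : S, IsClosed ({x} : Set S) ∧ S.Γevaluation x (f.appTop s) = 0 :=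
  exists_closedPoint_vanishing_pullback_section_general F S pS X s haff f hnc
end

section
/- Let k be a field and k' a finite Galois field extension of k of degree m. Regard the field of rational functions RatFunc k' as an algebra over RatFunc k via the ring homomorphism induced by the inclusion k → k'. Then for every nonzero h ∈ RatFunc k', the norm N(h) = Algebra.norm (RatFunc k) h ∈ RatFunc k is nonzero and satisfies intDegree(N(h)) = m · intDegree(h). Consequently, if g ∈ RatFunc k is nonzero and m does not divide intDegree(g), then g is not the norm of any element of RatFunc k'. -/
/-- The ring homomorphism `RatFunc k →+* RatFunc k'` induced by the inclusion `k → k'`. -/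
noncomputable def RatFunc.mapAlgebraMap (k k' : Type*) [Field k] [Field k'] [Algebra k k'] :
    RatFunc k →+* RatFunc k' :=
  RatFunc.mapRingHom (Polynomial.mapRingHom (algebraMap k k')) (by
    intro p hp
    simp only [Submonoid.mem_comap, Polynomial.coe_mapRingHom]
    rw [mem_nonZeroDivisors_iff_ne_zero] at hp ⊢
    exact fun h => hp (Polynomial.map_injective _ (algebraMap k k').injective
      (by simpa using h)))

/-- Regard `RatFunc k'` as an algebra over `RatFunc k` via the induced ring homomorphism. -/
noncomputable instance (k k' : Type*) [Field k] [Field k'] [Algebra k k'] :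
    Algebra (RatFunc k) (RatFunc k') :=
  (RatFunc.mapAlgebraMap k k').toAlgebra

/-!
The Galois group of `k'/k` acts on `k'(t)` through the coefficients, with fixed field `k(t)`.
Hence the norm of `h` is the product of its conjugates `σ h`, and since acting on the
coefficients does not change the degrees of numerator and denominator, every conjugate has the
same `intDegree` as `h`. So `intDegree (N h) = m * intDegree h`, and a norm has degree
divisible by `m`.
-/

open Polynomial

namespace RatFunc

variable {K L : Type*} [Field K] [Field L]

theorem intDegree_apply_of_algebraMap_eq_map (f : K →+* L) (φ : RatFunc K →+* RatFunc L)
    (hφ : ∀ p : K[X], φ (algebraMap K[X] (RatFunc K) p) = algebraMap L[X] (RatFunc L) (p.map f))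
    (x : RatFunc K) : (φ x).intDegree = x.intDegree := by
  rcases eq_or_ne x 0 with rfl | hx
  · simp
  have hnum : x.num.map f ≠ 0 := map_ne_zero (num_ne_zero hx)
  have hden : x.denom.map f ≠ 0 := map_ne_zero x.denom_ne_zero
  conv_lhs => rw [← num_div_denom x]
  rw [map_div₀, hφ, hφ, intDegree_div (algebraMap_ne_zero hnum) (algebraMap_ne_zero hden),
    intDegree_polynomial, intDegree_polynomial, natDegree_map, natDegree_map, intDegree]

theorem intDegree_prod {ι : Type*} (s : Finset ι) (f : ι → RatFunc K) (hf : ∀ i ∈ s, f i ≠ 0) :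
    (∏ i ∈ s, f i).intDegree = ∑ i ∈ s, (f i).intDegree := by
  classical
  induction s using Finset.induction_on with
  | empty => simp
  | insert i s his ih =>
    rw [Finset.prod_insert his, Finset.sum_insert his, intDegree_mul (hf i (by simp))
      (Finset.prod_ne_zero_iff.mpr fun j hj => hf j (by simp [hj])),
      ih fun j hj => hf j (by simp [hj])]

end RatFunc

theorem IsGaloisGroup.algebraMap_norm_eq_prod {G K L : Type*} [Group G] [Fintype G] [Field K]
    [Field L] [Algebra K L] [MulSemiringAction G L] [IsGaloisGroup G K L] (x : L) :
    algebraMap K L (Algebra.norm K x) = ∏ g : G, g • x := by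
  have := IsGaloisGroup.isGalois G K L
  have := IsGaloisGroup.finiteDimensional G K L
  rw [Algebra.norm_eq_prod_automorphisms]
  exact (Fintype.prod_equiv (IsGaloisGroup.mulEquivAlgEquiv G K L).toEquiv _ _
    fun _ => rfl).symm

section PolynomialAlgebra

attribute [local instance] Polynomial.algebra

theorem IsGaloisGroup.polynomial (G A B : Type*) [Group G] [CommSemiring A] [CommSemiring B]
    [Algebra A B] [MulSemiringAction G B] [IsGaloisGroup G A B] :
    IsGaloisGroup G A[X] B[X] where
  faithful := by
    have : FaithfulSMul G B := IsGaloisGroup.faithful A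
    refine ⟨fun {g h} hgh => eq_of_smul_eq_smul fun b : B => C_injective ?_⟩
    simpa [smul_C] using hgh (C b)
  commutes := ⟨fun g a p => by
    rw [Algebra.smul_def, Algebra.smul_def, smul_mul', algebraMap_def, coe_mapRingHom,
      smul_eq_map, map_map]
    congr 3
    ext x
    exact smul_algebraMap g x⟩
  isInvariant := ⟨fun p hp => by
    have : p ∈ lifts (algebraMap A B) := by
      refine (lifts_iff_coeff_lifts p).mpr fun n =>
        Algebra.IsInvariant.isInvariant (G := G) _ fun g => ?_
      simpa using congr(coeff $(hp g) n)
    exact (mem_lifts p).mp this⟩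

variable (k k' : Type*) [Field k] [Field k'] [Algebra k k']

theorem RatFunc.algebraMap_algebraMap_polynomial (p : k[X]) :
    algebraMap (RatFunc k) (RatFunc k') (algebraMap k[X] (RatFunc k) p) =
      algebraMap k'[X] (RatFunc k') (p.map (algebraMap k k')) := by
  change RatFunc.mapAlgebraMap k k' _ = _
  rw [RatFunc.mapAlgebraMap, RatFunc.coe_mapRingHom_eq_coe_map,
    ← div_one (algebraMap k[X] (RatFunc k) p), ← map_one (algebraMap k[X] (RatFunc k)),
    RatFunc.map_apply_div]
  simp

instance : IsScalarTower k[X] (RatFunc k) (RatFunc k') :=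
  .of_algebraMap_eq fun p => (RatFunc.algebraMap_algebraMap_polynomial k k' p).symm

theorem RatFunc.intDegree_algebraMap (x : RatFunc k) :
    (algebraMap (RatFunc k) (RatFunc k') x).intDegree = x.intDegree :=
  RatFunc.intDegree_apply_of_algebraMap_eq_map (algebraMap k k') _
    (RatFunc.algebraMap_algebraMap_polynomial k k') x

variable (G : Type*) [Group G] [MulSemiringAction G k'] [MulSemiringAction G (RatFunc k')]
  [SMulDistribClass G k'[X] (RatFunc k')]

theorem RatFunc.intDegree_smul (g : G) (x : RatFunc k') : (g • x).intDegree = x.intDegree :=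
  RatFunc.intDegree_apply_of_algebraMap_eq_map (MulSemiringAction.toRingHom G k' g)
    (MulSemiringAction.toRingHom G (RatFunc k') g)
    (fun p => by simp [← algebraMap.coe_smul', smul_eq_map]) x

theorem IsGaloisGroup.ratFunc [Finite G] [IsGaloisGroup G k k'] :
    IsGaloisGroup G (RatFunc k) (RatFunc k') :=
  have := IsGaloisGroup.polynomial G k k'
  IsGaloisGroup.to_isFractionRing G k[X] k'[X] _ _

end PolynomialAlgebra

section Galois

variable (k k' : Type*) [Field k] [Field k'] [Algebra k k'] [IsGalois k k']
  [FiniteDimensional k k']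

theorem RatFunc.finiteDimensional_of_isGalois : FiniteDimensional (RatFunc k) (RatFunc k') :=
  let := IsFractionRing.mulSemiringAction Gal(k'/k) k'[X] (RatFunc k')
  have := IsGaloisGroup.ratFunc k k' Gal(k'/k)
  IsGaloisGroup.finiteDimensional Gal(k'/k) (RatFunc k) (RatFunc k')

theorem RatFunc.intDegree_norm (h : RatFunc k') :
    (Algebra.norm (RatFunc k) h).intDegree = Module.finrank k k' * h.intDegree := by
  let := IsFractionRing.mulSemiringAction Gal(k'/k) k'[X] (RatFunc k')
  have := IsGaloisGroup.ratFunc k k' Gal(k'/k)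
  have := RatFunc.finiteDimensional_of_isGalois k k'
  rcases eq_or_ne h 0 with rfl | hh
  · simp
  rw [← RatFunc.intDegree_algebraMap k k', IsGaloisGroup.algebraMap_norm_eq_prod (G := Gal(k'/k)),
    RatFunc.intDegree_prod _ _ fun g _ => (smul_ne_zero_iff_ne g).mpr hh]
  simp only [RatFunc.intDegree_smul, Finset.sum_const, Finset.card_univ, nsmul_eq_mul,
    ← Nat.card_eq_fintype_card, IsGaloisGroup.card_eq_finrank Gal(k'/k) k k']

end Galois

/-- **Norm degree computation (from the proof of Proposition 5.4):** for a finite Galois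
extension `k'/k` of degree `m`, the norm from `k'(t)` to `k(t)` of a nonzero element is nonzero
of `intDegree` equal to `m` times the original `intDegree`; consequently a nonzero `g ∈ k(t)`
whose `intDegree` is not divisible by `m` is not a norm from `k'(t)`. -/
theorem ratFunc_norm_intDegree
    (k k' : Type*) [Field k] [Field k'] [Algebra k k'] [IsGalois k k']
    [FiniteDimensional k k'] (m : ℕ) (hm : Module.finrank k k' = m) :
    (∀ h : RatFunc k', h ≠ 0 →
      Algebra.norm (RatFunc k) h ≠ 0 ∧
        (Algebra.norm (RatFunc k) h).intDegree = (m : ℤ) * h.intDegree) ∧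
    (∀ g : RatFunc k, g ≠ 0 → ¬ ((m : ℤ) ∣ g.intDegree) →
      ∀ h : RatFunc k', Algebra.norm (RatFunc k) h ≠ g) := by
  have := RatFunc.finiteDimensional_of_isGalois k k'
  have hdeg (h : RatFunc k') :
      (Algebra.norm (RatFunc k) h).intDegree = (m : ℤ) * h.intDegree := by
    rw [RatFunc.intDegree_norm, hm]
  exact ⟨fun h hh => ⟨Algebra.norm_ne_zero_iff.mpr hh, hdeg h⟩,
    fun g _ hg h hgh => hg ⟨h.intDegree, hgh ▸ hdeg h⟩⟩
end

section
/- Let K be a field, ξ ∈ K, and m a positive integer such that the polynomial X^m − ξ is irreducible over K. Let L = K[X]/(X^m − ξ) and let r ∈ L denote the image of X, so that {1, r, r², …, r^{m−1}} is a K-basis of L. Then for all x₀, x₁, …, x_{m−1} ∈ K, the field norm Norm_{L/K}(x₀ + x₁ r + ⋯ + x_{m−1} r^{m−1}) equals the determinant of the m × m matrix M over K whose (i,j)-entry, for indices 0 ≤ i, j ≤ m − 1, is x_{i−j} if i ≥ j and ξ · x_{m+i−j} if i < j. -/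
/-!
Multiplying `r ^ k` by `r ^ j` adds the exponents, and an exponent that reaches `m` wraps around
at the cost of a factor `r ^ m = ξ`. Hence in the basis `1, r, …, r ^ (m - 1)` the matrix of
multiplication by `∑ xᵢ rⁱ` is the circulant matrix of `x` with the wrapped-around entries (those
above the diagonal) multiplied by `ξ`, and the norm is its determinant.
-/

open Polynomial

/-- Subtraction in `Fin m` is modulo `m`, so `i - j` is `m + i - j` above the diagonal. -/
def Matrix.twistedCirculant {R : Type*} [Mul R] {m : ℕ} (ξ : R) (x : Fin m → R) :
    Matrix (Fin m) (Fin m) R :=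
  Matrix.of fun i j => if j ≤ i then x (i - j) else ξ * x (i - j)

section

variable {R A : Type*} [CommSemiring R] [Semiring A] [Algebra R A] {m : ℕ} {r : A} {ξ : R}

theorem pow_val_sub_add_val_of_pow_eq (hr : r ^ m = algebraMap R A ξ) (i j : Fin m) :
    r ^ ((i - j : Fin m) + (j : ℕ)) = (if j ≤ i then 1 else ξ) • r ^ (i : ℕ) := by
  by_cases h : j ≤ i
  · rw [Fin.sub_val_of_le h, Nat.sub_add_cancel h, if_pos h, one_smul]
  · rw [Fin.coe_sub_iff_lt.2 (not_le.1 h), if_neg h, Nat.sub_add_cancel (by omega), pow_add, hr,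
      Algebra.smul_def]

theorem sum_smul_pow_mul_pow_of_pow_eq [NeZero m] (hr : r ^ m = algebraMap R A ξ)
    (x : Fin m → R) (j : Fin m) :
    (∑ i : Fin m, x i • r ^ (i : ℕ)) * r ^ (j : ℕ) =
      ∑ i : Fin m, Matrix.twistedCirculant ξ x i j • r ^ (i : ℕ) := by
  rw [Finset.sum_mul, ← Equiv.sum_comp (Equiv.subRight j)]
  refine Finset.sum_congr rfl fun i _ => ?_
  rw [Equiv.subRight_apply, smul_mul_assoc, ← pow_add, pow_val_sub_add_val_of_pow_eq hr, smul_smul,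
    Matrix.twistedCirculant, Matrix.of_apply]
  split_ifs <;> simp only [mul_one, mul_comm]

end

theorem Algebra.leftMulMatrix_sum_smul_pow_of_pow_eq {R A : Type*} [CommRing R] [Ring A]
    [Algebra R A] {m : ℕ} [NeZero m] {r : A} {ξ : R} (hr : r ^ m = algebraMap R A ξ)
    (b : Module.Basis (Fin m) R A) (hb : ∀ i, b i = r ^ (i : ℕ)) (x : Fin m → R) :
    Algebra.leftMulMatrix b (∑ i : Fin m, x i • r ^ (i : ℕ)) = Matrix.twistedCirculant ξ x := by
  ext i j
  simp_rw [Algebra.leftMulMatrix_eq_repr_mul, hb, sum_smul_pow_mul_pow_of_pow_eq hr, ← hb,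
    Module.Basis.repr_sum_self]

namespace AdjoinRoot

variable {R : Type*} [CommRing R]

theorem root_X_pow_sub_C_pow_eq_algebraMap (m : ℕ) (ξ : R) :
    root (X ^ m - C ξ) ^ m = algebraMap R (AdjoinRoot (X ^ m - C ξ)) ξ := by
  rw [← sub_eq_zero, algebraMap_eq, ← eval₂_root, eval₂_sub, eval₂_C, eval₂_pow, eval₂_X]

theorem norm_sum_smul_root_X_pow_sub_C_pow [Nontrivial R] {m : ℕ} (hm : m ≠ 0) (ξ : R)
    (x : Fin m → R) :
    Algebra.norm R (∑ i : Fin m, x i • root (X ^ m - C ξ) ^ (i : ℕ)) =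
      (Matrix.twistedCirculant ξ x).det := by
  have : NeZero m := ⟨hm⟩
  let b := (powerBasis' (monic_X_pow_sub_C ξ hm)).basis.reindex (finCongr natDegree_X_pow_sub_C)
  have hb : ∀ i, b i = root (X ^ m - C ξ) ^ (i : ℕ) := fun i => by
    rw [Module.Basis.reindex_apply, PowerBasis.basis_eq_pow, powerBasis'_gen]
    rfl
  rw [Algebra.norm_eq_matrix_det b,
    Algebra.leftMulMatrix_sum_smul_pow_of_pow_eq (root_X_pow_sub_C_pow_eq_algebraMap m ξ) b hb]

end AdjoinRoot

/-- **The norm form of a Kummer-type extension (paragraph 3.10.3):** the field norm of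
`x₀ + x₁ r + ⋯ + x_{m−1} r^{m−1}` in `L = K[X]/(X^m − ξ)` is the determinant of the twisted
circulant matrix `M_{ξ,m}`. -/
theorem norm_adjoinRoot_eq_det_circulant
    (K : Type*) [Field K] (ξ : K) (m : ℕ) (hm : 0 < m)
    (x : Fin m → K) :
    Algebra.norm K
      (∑ i : Fin m,
        algebraMap K (AdjoinRoot (X ^ m - C ξ)) (x i) * AdjoinRoot.root (X ^ m - C ξ) ^ (i : ℕ)) =
    Matrix.det (Matrix.of fun i j : Fin m =>
      if h : (j : ℕ) ≤ (i : ℕ) then x ⟨(i : ℕ) - (j : ℕ), by have := i.isLt; omega⟩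
      else ξ * x ⟨m + (i : ℕ) - (j : ℕ), by have := i.isLt; have := j.isLt; omega⟩) := by
  simp_rw [← Algebra.smul_def, AdjoinRoot.norm_sum_smul_root_X_pow_sub_C_pow hm.ne']
  congr 1
  ext i j
  rw [Matrix.twistedCirculant, Matrix.of_apply, Matrix.of_apply]
  by_cases h : j ≤ i
  · rw [if_pos h, dif_pos (Fin.le_def.1 h)]
    exact congrArg x (Fin.ext (Fin.sub_val_of_le h))
  · rw [if_neg h, dif_neg (mt Fin.le_def.2 h)]
    exact congrArg (ξ * x ·) (Fin.ext (Fin.coe_sub_iff_lt.2 (not_le.1 h)))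
end
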